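/- Let Ω be a bounded domain in ℂⁿ, φ ∈ L^∞(Ω), 0 ≤ p, q ≤ n, and ψ ∈ C(cl(Ω)). If the Toeplitz operator T^{p,q}_φ is compact on K²_{(p,q)}(Ω), then the Toeplitz operator T^{p,q}_{φψ} is compact on K²_{(p,q)}(Ω). -/

import Mathlib

open MeasureTheory Metric Complex Bornology
open scoped ENNReal NNReal ComplexConjugate

noncomputable section

/-- `ℂⁿ` as a Euclidean (Hermitian) space. -/
abbrev CE (n : ℕ) : Type := EuclideanSpace ℂ (Fin n)

instance (n : ℕ) : MeasurableSpace (CE n) := MeasurableSpace.comap WithLp.ofLp MeasurableSpace.pi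

instance (n : ℕ) : BorelSpace (CE n) := inferInstanceAs (BorelSpace (PiLp 2 fun _ : Fin n => ℂ))

/-- Lebesgue measure on `ℂⁿ`. -/
instance (n : ℕ) : MeasureSpace (CE n) := ⟨(Measure.pi fun _ : Fin n => (volume : Measure ℂ)).map (WithLp.toLp 2)⟩

/-- A function is plurisubharmonic on a set if it is upper semicontinuous there and
satisfies the sub-mean value inequality on circles in every complex line. -/
def PlurisubharmonicOn {n : ℕ} (u : CE n → ℝ) (s : Set (CE n)) : Prop :=
  UpperSemicontinuousOn u s ∧
    ∀ a b : CE n, ∀ R : ℝ, 0 < R →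
      (∀ t : ℂ, ‖t‖ ≤ R → a + t • b ∈ s) →
      u a ≤ (2 * Real.pi)⁻¹ *
        ∫ θ in (0:ℝ)..(2 * Real.pi), u (a + ((R : ℂ) * Complex.exp (θ * Complex.I)) • b)

/-- A domain `Ω ⊆ ℂⁿ` is pseudoconvex if `-log dist(·, bΩ)` is plurisubharmonic on `Ω`. -/
def Pseudoconvex {n : ℕ} (Ω : Set (CE n)) : Prop :=
  PlurisubharmonicOn (fun z => -Real.log (infDist z Ωᶜ)) Ω

/-- A bounded domain has Lipschitz boundary if near each boundary point, after choosing a unit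
direction `ν`, the domain is the strict subgraph of a Lipschitz function over the real
hyperplane orthogonal to `ν`. -/
def HasLipschitzBoundary {n : ℕ} (Ω : Set (CE n)) : Prop :=
  ∀ p ∈ frontier Ω, ∃ ν : CE n, ‖ν‖ = 1 ∧ ∃ ε > 0, ∃ (L : NNReal) (ψ : CE n → ℝ),
    LipschitzWith L ψ ∧
      ∀ x ∈ ball p ε, (x ∈ Ω ↔ (inner ℂ x ν : ℂ).re < ψ (x - ((inner ℂ x ν : ℂ).re • ν)))

/-- A Lipschitz defining function for `Ω`: a (globally) Lipschitz function with
`Ω = {ρ < 0}` which is comparable to the negative boundary distance on `Ω`. -/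
def IsLipschitzDefiningFunction {n : ℕ} (Ω : Set (CE n)) (ρ : CE n → ℝ) : Prop :=
  (∃ L : NNReal, LipschitzWith L ρ) ∧ Ω = {z | ρ z < 0} ∧
    ∃ c C : ℝ, 0 < c ∧ 0 < C ∧
      ∀ z ∈ Ω, c * infDist z Ωᶜ ≤ -ρ z ∧ -ρ z ≤ C * infDist z Ωᶜ

/-- The measure `h dV` on `Ω ⊆ ℂⁿ`; `L²(Ω, h)` is `Lp ℂ 2` of this measure. -/
def wMeasure {n : ℕ} (Ω : Set (CE n)) (h : CE n → ℝ) : Measure (CE n) :=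
  (volume.restrict Ω).withDensity fun z => ENNReal.ofReal (h z)

/-- An element of `L²(Ω, h)` belongs to the Bergman space `A²(Ω, h)` if it has a
representative holomorphic on `Ω`. -/
def IsBergmanFun {n : ℕ} (Ω : Set (CE n)) (μ : Measure (CE n)) (f : Lp ℂ 2 μ) : Prop :=
  ∃ g : CE n → ℂ, DifferentiableOn ℂ g Ω ∧ ∀ᵐ z ∂μ, f z = g z

/-- The Bergman space `A²(Ω, h)` as a subset of `L²(Ω, h)`. -/
def bergmanSet {n : ℕ} (Ω : Set (CE n)) (μ : Measure (CE n)) : Set (Lp ℂ 2 μ) :=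
  {f | IsBergmanFun Ω μ f}

/-- `P` is the Bergman projection: the orthogonal projection of `L²(Ω, h)` onto `A²(Ω, h)`. -/
def IsBergmanProjection {n : ℕ} (Ω : Set (CE n)) (μ : Measure (CE n))
    (P : Lp ℂ 2 μ →L[ℂ] Lp ℂ 2 μ) : Prop :=
  (∀ f, IsBergmanFun Ω μ (P f)) ∧ (∀ f, IsBergmanFun Ω μ f → P f = f) ∧
    ∀ f g : Lp ℂ 2 μ, IsBergmanFun Ω μ g → (inner ℂ (f - P f) g : ℂ) = 0

/-- `M` is the operator of multiplication by `φ` on `L²(Ω, h)`. -/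
def IsMultiplicationOp {n : ℕ} (μ : Measure (CE n)) (φ : CE n → ℂ)
    (M : Lp ℂ 2 μ →L[ℂ] Lp ℂ 2 μ) : Prop :=
  ∀ f : Lp ℂ 2 μ, (M f : CE n → ℂ) =ᵐ[μ] fun z => φ z * f z

/-- A (bounded linear) map `T` is a compact operator on the subspace `A` if the image
of the unit ball of `A` is relatively compact. -/
def CompactOnSet {H K : Type*} [NormedAddCommGroup H] [NormedAddCommGroup K]
    (T : H → K) (A : Set H) : Prop :=
  IsCompact (closure (T '' (A ∩ Metric.closedBall 0 1)))

/-- The index set for (p,q)-forms: pairs of strictly increasing multi-indices, encoded as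
pairs of subsets of `{1,…,n}` of cardinalities `p` and `q`. -/
abbrev FormIdx (n p q : ℕ) : Type :=
  {s : Finset (Fin n) // s.card = p} × {s : Finset (Fin n) // s.card = q}

/-- The fiber of the bundle of (p,q)-forms: one complex coefficient for each pair of
increasing multi-indices. -/
abbrev FormSp (n p q : ℕ) : Type := EuclideanSpace ℂ (FormIdx n p q)

/-- The Wirtinger derivative `∂χ/∂z̄ⱼ = (∂χ/∂xⱼ + i ∂χ/∂yⱼ)/2` of a test function. -/
def wirtingerBar {n : ℕ} (j : Fin n) (χ : CE n → ℂ) (z : CE n) : ℂ :=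
  (fderiv ℝ χ z (EuclideanSpace.single j 1) +
    Complex.I * fderiv ℝ χ z (Complex.I • EuclideanSpace.single j 1)) / 2

/-- A locally integrable `(p,q)`-form with coefficients `f (J,K)` is `∂̄`-closed on `Ω` in the
sense of distributions: for every `p`-index `J`, every `(q+1)`-index `L` and every test
function `χ`, the weak-derivative identity expressing that the coefficient of
`dz_J ∧ dz̄_L` in `∂̄f` vanishes holds. -/
def DbarClosedOn {n p q : ℕ} (Ω : Set (CE n)) (f : CE n → FormIdx n p q → ℂ) : Prop :=
  ∀ (J : {s : Finset (Fin n) // s.card = p}) (L : Finset (Fin n)) (hL : L.card = q + 1),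
    ∀ χ : CE n → ℂ, ContDiff ℝ (⊤ : ℕ∞) χ → HasCompactSupport χ → tsupport χ ⊆ Ω →
      ∑ j ∈ L.attach,
        ((-1 : ℂ) ^ (L.filter fun i => i < j.1).card *
          ∫ z in Ω,
            f z (J, ⟨L.erase j.1, by simp [Finset.card_erase_of_mem j.2, hL]⟩) *
              wirtingerBar j.1 χ z) = 0

/-- `K²_{(p,q)}(Ω)`: the set of square-integrable `∂̄`-closed `(p,q)`-forms on `Ω`, as a
subset of the square-integrable `(p,q)`-forms `L²_{(p,q)}(Ω)`. -/
def ksqSet {n : ℕ} (p q : ℕ) (Ω : Set (CE n)) :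
    Set (Lp (FormSp n p q) 2 (volume.restrict Ω)) :=
  {f | DbarClosedOn Ω fun z idx => (f : CE n → FormSp n p q) z idx}

/-- `P` is the Bergman projection of `L²_{(p,q)}(Ω)` onto `K²_{(p,q)}(Ω)`. -/
def IsKsqProjection {n : ℕ} (p q : ℕ) (Ω : Set (CE n))
    (P : Lp (FormSp n p q) 2 (volume.restrict Ω) →L[ℂ]
      Lp (FormSp n p q) 2 (volume.restrict Ω)) : Prop :=
  (∀ f, P f ∈ ksqSet p q Ω) ∧ (∀ f ∈ ksqSet p q Ω, P f = f) ∧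
    ∀ f, ∀ g ∈ ksqSet p q Ω, (inner ℂ (f - P f) g : ℂ) = 0

/-- `M` is the operator of multiplication by the (scalar) symbol `φ` on `L²_{(p,q)}(Ω)`. -/
def IsFormMultiplicationOp {n : ℕ} (p q : ℕ) (μ : Measure (CE n)) (φ : CE n → ℂ)
    (M : Lp (FormSp n p q) 2 μ →L[ℂ] Lp (FormSp n p q) 2 μ) : Prop :=
  ∀ f : Lp (FormSp n p q) 2 μ,
    (M f : CE n → FormSp n p q) =ᵐ[μ] fun z => φ z • (f : CE n → FormSp n p q) z


/-!
Call `v` a compact-Toeplitz multiplier if `T_{g v}` is compact whenever `T_g` is, for every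
bounded `g`. Multipliers form an algebra, closed under uniform limits because
`‖T_{g v} - T_{g w}‖ ≤ ‖T_g‖ ‖v - w‖_∞`. A coordinate `z_j` is a multiplier since `M_{z_j}`
preserves `∂̄`-closed forms, so `T_{g z_j} = T_g M_{z_j}`. Its conjugate is one too: then
`M_{z̄_j} = M_{z_j}*` preserves `K²⊥`, so `T_{g z̄_j} = T_{z̄_j} T_g`. By Stone–Weierstrass every
`ψ ∈ C(cl Ω)` is a uniform limit of polynomials in `z, z̄`, hence a multiplier.
-/

section MulOp

variable {α E : Type*} [MeasurableSpace α] {μ : Measure α} [NormedAddCommGroup E]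
  [InnerProductSpace ℂ E]

open Classical in
/-- Junk value `0` when `c` is not essentially bounded. -/
def mulOp (μ : Measure α) (c : α → ℂ) : Lp E 2 μ →L[ℂ] Lp E 2 μ :=
  if hc : MemLp c ∞ μ then (ContinuousLinearMap.lsmul ℂ ℂ).holderL μ ∞ 2 2 (hc.toLp c) else 0

theorem mulOp_apply {c : α → ℂ} (hc : MemLp c ∞ μ) (f : Lp E 2 μ) :
    mulOp μ c f = (ContinuousLinearMap.lsmul ℂ ℂ).holder 2 (hc.toLp c) f := by
  rw [mulOp, dif_pos hc, ContinuousLinearMap.holderL_apply_apply]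

theorem coeFn_mulOp {c : α → ℂ} (hc : MemLp c ∞ μ) (f : Lp E 2 μ) :
    mulOp μ c f =ᵐ[μ] fun x => c x • f x := by
  rw [mulOp_apply hc]
  filter_upwards [(ContinuousLinearMap.lsmul ℂ ℂ).coeFn_holder (r := 2) (hc.toLp c) f,
    hc.coeFn_toLp] with x h1 h2
  rw [h1, h2, ContinuousLinearMap.lsmul_apply]

theorem eq_mulOp {c : α → ℂ} (hc : MemLp c ∞ μ) {M : Lp E 2 μ →L[ℂ] Lp E 2 μ}
    (hM : ∀ f, M f =ᵐ[μ] fun x => c x • f x) : M = mulOp μ c := by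
  ext1 f
  refine Lp.ext ?_
  filter_upwards [hM f, coeFn_mulOp hc f] with x h1 h2
  rw [h1, h2]

theorem mulOp_mul {a b : α → ℂ} (ha : MemLp a ∞ μ) (hb : MemLp b ∞ μ) :
    (mulOp μ (a * b) : Lp E 2 μ →L[ℂ] Lp E 2 μ) = mulOp μ a ∘L mulOp μ b := by
  refine (eq_mulOp (hb.mul ha) fun f => ?_).symm
  filter_upwards [coeFn_mulOp ha (mulOp μ b f), coeFn_mulOp hb f] with x h1 h2
  rw [ContinuousLinearMap.comp_apply, h1, h2, Pi.mul_apply, mul_smul]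

theorem mulOp_add {a b : α → ℂ} (ha : MemLp a ∞ μ) (hb : MemLp b ∞ μ) :
    (mulOp μ (a + b) : Lp E 2 μ →L[ℂ] Lp E 2 μ) = mulOp μ a + mulOp μ b := by
  refine (eq_mulOp (ha.add hb) fun f => ?_).symm
  filter_upwards [coeFn_mulOp ha f, coeFn_mulOp hb f, Lp.coeFn_add (mulOp μ a f) (mulOp μ b f)]
    with x h1 h2 h3
  rw [add_apply, h3, Pi.add_apply, h1, h2, Pi.add_apply, add_smul]

theorem mulOp_sub {a b : α → ℂ} (ha : MemLp a ∞ μ) (hb : MemLp b ∞ μ) :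
    (mulOp μ (a - b) : Lp E 2 μ →L[ℂ] Lp E 2 μ) = mulOp μ a - mulOp μ b := by
  refine (eq_mulOp (ha.sub hb) fun f => ?_).symm
  filter_upwards [coeFn_mulOp ha f, coeFn_mulOp hb f, Lp.coeFn_sub (mulOp μ a f) (mulOp μ b f)]
    with x h1 h2 h3
  rw [sub_apply, h3, Pi.sub_apply, h1, h2, Pi.sub_apply, sub_smul]

theorem mulOp_const (c : ℂ) :
    (mulOp μ (fun _ => c) : Lp E 2 μ →L[ℂ] Lp E 2 μ) = c • ContinuousLinearMap.id ℂ _ := by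
  refine (eq_mulOp (memLp_top_const c) fun f => ?_).symm
  filter_upwards [Lp.coeFn_smul c f] with x h
  rw [smul_apply, ContinuousLinearMap.id_apply, h, Pi.smul_apply]

theorem norm_mulOp_le {c : α → ℂ} {C : ℝ} (hC : 0 ≤ C) (hcC : ∀ᵐ x ∂μ, ‖c x‖ ≤ C) :
    ‖(mulOp μ c : Lp E 2 μ →L[ℂ] Lp E 2 μ)‖ ≤ C := by
  by_cases hc : MemLp c ∞ μ
  · have hsym : ‖hc.toLp c‖ ≤ C := by
      rw [Lp.norm_toLp, eLpNorm_exponent_top]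
      exact ENNReal.toReal_le_of_le_ofReal hC (eLpNormEssSup_le_of_ae_bound hcC)
    refine ContinuousLinearMap.opNorm_le_bound _ hC fun f => ?_
    calc ‖mulOp μ c f‖
        ≤ ‖(ContinuousLinearMap.lsmul ℂ ℂ : ℂ →L[ℂ] E →L[ℂ] E)‖ * ‖hc.toLp c‖ * ‖f‖ := by
          rw [mulOp_apply hc]
          exact ContinuousLinearMap.norm_holder_apply_apply_le _ _ _
      _ ≤ 1 * C * ‖f‖ := by
          gcongr
          exact ContinuousLinearMap.opNorm_lsmul_le
      _ = C * ‖f‖ := by rw [one_mul]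
  · rw [mulOp, dif_neg hc, ContinuousLinearMap.opNorm_zero]
    exact hC

theorem adjoint_mulOp [CompleteSpace E] {c : α → ℂ} (hc : MemLp c ∞ μ) :
    ContinuousLinearMap.adjoint (mulOp μ c : Lp E 2 μ →L[ℂ] Lp E 2 μ) = mulOp μ (star c) := by
  refine ((ContinuousLinearMap.eq_adjoint_iff _ _).mpr fun f g => ?_).symm
  rw [L2.inner_def, L2.inner_def]
  refine integral_congr_ae ?_
  filter_upwards [coeFn_mulOp hc.star f, coeFn_mulOp hc g] with x h1 h2
  rw [h1, h2, inner_smul_left, inner_smul_right, Pi.star_apply]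
  simp

end MulOp

namespace CompactOnSet

variable {H F G : Type*} [NormedAddCommGroup H] [NormedAddCommGroup F] [NormedAddCommGroup G]
  {A : Set H}

theorem comp_left {T : H → F} (hT : CompactOnSet T A) {B : F → G} (hB : Continuous B) :
    CompactOnSet (B ∘ T) A := by
  have hK := hT.image hB
  refine hK.of_isClosed_subset isClosed_closure (closure_minimal ?_ hK.isClosed)
  rw [Set.image_comp]
  exact Set.image_mono subset_closure

theorem add {T T' : H → F} (hT : CompactOnSet T A) (hT' : CompactOnSet T' A) :
    CompactOnSet (T + T') A := by
  have hK := IsCompact.add hT hT'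
  refine hK.of_isClosed_subset isClosed_closure (closure_minimal ?_ hK.isClosed)
  rintro _ ⟨x, hx, rfl⟩
  exact Set.add_mem_add (subset_closure ⟨x, hx, rfl⟩) (subset_closure ⟨x, hx, rfl⟩)

variable {𝕜 : Type*} [RCLike 𝕜] [NormedSpace 𝕜 H] [NormedSpace 𝕜 F] [NormedSpace 𝕜 G]

theorem clm_comp {T : H →L[𝕜] F} (hT : CompactOnSet T A) (B : F →L[𝕜] G) :
    CompactOnSet (B ∘L T) A :=
  hT.comp_left B.continuous

theorem smul {T : H →L[𝕜] F} (hT : CompactOnSet T A) (c : 𝕜) : CompactOnSet (c • T) A :=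
  hT.comp_left (continuous_const_smul c)

theorem comp_right {T : H →L[𝕜] F} (hT : CompactOnSet T A) {B : H →L[𝕜] H}
    (hA : ∀ c : 𝕜, ∀ x ∈ A, c • x ∈ A) (hB : ∀ x ∈ A, B x ∈ A) :
    CompactOnSet (T ∘L B) A := by
  set R : ℝ := ‖B‖ + 1
  have hR : 0 < R := by positivity
  have hK := hT.image (continuous_const_smul (R : 𝕜))
  refine hK.of_isClosed_subset isClosed_closure (closure_minimal ?_ hK.isClosed)
  rintro _ ⟨x, ⟨hxA, hx⟩, rfl⟩
  have hRx : (R : 𝕜)⁻¹ • B x ∈ A ∩ closedBall 0 1 := by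
    refine ⟨hA _ _ (hB x hxA), ?_⟩
    rw [mem_closedBall_zero_iff] at hx ⊢
    rw [norm_smul, norm_inv, RCLike.norm_ofReal, abs_of_pos hR, inv_mul_le_iff₀ hR, mul_one]
    calc ‖B x‖ ≤ ‖B‖ * ‖x‖ := B.le_opNorm x
      _ ≤ ‖B‖ * 1 := by gcongr
      _ ≤ R := by simp [R]
  refine ⟨T ((R : 𝕜)⁻¹ • B x), subset_closure ⟨_, hRx, rfl⟩, ?_⟩
  change (R : 𝕜) • T ((R : 𝕜)⁻¹ • B x) = T (B x)
  rw [map_smul, smul_inv_smul₀ (RCLike.ofReal_ne_zero.mpr hR.ne')]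

theorem of_norm_sub_le [CompleteSpace F] {T : H →L[𝕜] F}
    (h : ∀ ε > 0, ∃ T' : H →L[𝕜] F, CompactOnSet T' A ∧ ‖T - T'‖ ≤ ε) : CompactOnSet T A := by
  refine TotallyBounded.isCompact_of_isClosed (TotallyBounded.closure ?_) isClosed_closure
  rw [Metric.totallyBounded_iff]
  intro ε hε
  obtain ⟨T', hT', hTT'⟩ := h (ε / 3) (by positivity)
  obtain ⟨t, ht, hcover⟩ := Metric.totallyBounded_iff.mp hT'.totallyBounded (ε / 2) (by positivity)
  refine ⟨t, ht, ?_⟩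
  rintro _ ⟨x, hx, rfl⟩
  obtain ⟨y, hy, hxy⟩ := Set.mem_iUnion₂.mp (hcover (subset_closure ⟨x, hx, rfl⟩))
  refine Set.mem_iUnion₂.mpr ⟨y, hy, ?_⟩
  have hx1 : ‖x‖ ≤ 1 := mem_closedBall_zero_iff.mp hx.2
  have hclose : dist (T x) (T' x) ≤ ε / 3 := by
    rw [dist_eq_norm, ← sub_apply]
    calc ‖(T - T') x‖ ≤ ‖T - T'‖ * ‖x‖ := (T - T').le_opNorm x
      _ ≤ ε / 3 * 1 := by gcongr
      _ = ε / 3 := mul_one _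
  rw [mem_ball] at hxy ⊢
  linarith [dist_triangle (T x) (T' x) y]

end CompactOnSet

section Projection

variable {𝕜 H : Type*} [RCLike 𝕜] [NormedAddCommGroup H] [InnerProductSpace 𝕜 H]
  {P : H →L[𝕜] H} {K : Set H}

theorem inner_apply_eq_of_orthogonal (hP : ∀ f, ∀ g ∈ K, inner 𝕜 (f - P f) g = 0) (f : H)
    {g : H} (hg : g ∈ K) : inner 𝕜 (P f) g = inner 𝕜 f g := by
  rw [← sub_eq_zero, ← inner_sub_left, ← neg_sub, inner_neg_left, hP f g hg, neg_zero]

/-- If `B` leaves `K` invariant, then `B†` leaves `K⊥` invariant. -/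
theorem comp_adjoint_comp_eq_of_orthogonal [CompleteSpace H] (hPK : ∀ f, P f ∈ K)
    (hP : ∀ f, ∀ g ∈ K, inner 𝕜 (f - P f) g = 0) {B : H →L[𝕜] H} (hB : ∀ u ∈ K, B u ∈ K) :
    P ∘L B.adjoint ∘L P = P ∘L B.adjoint := by
  ext1 f
  have hw : P (B.adjoint (f - P f)) = 0 := by
    refine (inner_self_eq_zero (𝕜 := 𝕜)).mp ?_
    rw [inner_apply_eq_of_orthogonal hP _ (hPK _), ContinuousLinearMap.adjoint_inner_left,
      hP f _ (hB _ (hPK _))]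
  rw [map_sub, map_sub, sub_eq_zero] at hw
  exact hw.symm

end Projection

section Multiplier

variable {α E : Type*} [MeasurableSpace α] {μ : Measure α} [NormedAddCommGroup E]
  [InnerProductSpace ℂ E] {P : Lp E 2 μ →L[ℂ] Lp E 2 μ} {K : Set (Lp E 2 μ)}

def IsCompactToeplitzMultiplier (P : Lp E 2 μ →L[ℂ] Lp E 2 μ) (K : Set (Lp E 2 μ))
    (v : α → ℂ) : Prop :=
  MemLp v ∞ μ ∧ ∀ g : α → ℂ, MemLp g ∞ μ → CompactOnSet (P ∘L mulOp μ g) K →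
    CompactOnSet (P ∘L mulOp μ (g * v)) K

namespace IsCompactToeplitzMultiplier

theorem of_mapsTo {v : α → ℂ} (hv : MemLp v ∞ μ) (hK : ∀ c : ℂ, ∀ u ∈ K, c • u ∈ K)
    (hvK : ∀ u ∈ K, mulOp μ v u ∈ K) : IsCompactToeplitzMultiplier P K v := by
  refine ⟨hv, fun g hg hT => ?_⟩
  rw [mulOp_mul hg hv, ← ContinuousLinearMap.comp_assoc]
  exact hT.comp_right hK hvK

theorem star_of_mapsTo [CompleteSpace E] {v : α → ℂ} (hv : MemLp v ∞ μ) (hPK : ∀ f, P f ∈ K)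
    (hP : ∀ f, ∀ g ∈ K, inner ℂ (f - P f) g = 0) (hvK : ∀ u ∈ K, mulOp μ v u ∈ K) :
    IsCompactToeplitzMultiplier P K (star v) := by
  refine ⟨hv.star, fun g hg hT => ?_⟩
  have hfactor : P ∘L mulOp μ (g * star v) =
      (P ∘L (mulOp μ v).adjoint) ∘L (P ∘L mulOp μ g) := by
    conv_lhs => rw [mul_comm, mulOp_mul hv.star hg, ← adjoint_mulOp hv,
      ← ContinuousLinearMap.comp_assoc, ← comp_adjoint_comp_eq_of_orthogonal hPK hP hvK]
    simp only [ContinuousLinearMap.comp_assoc]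
  rw [hfactor]
  exact hT.clm_comp _

theorem const (c : ℂ) : IsCompactToeplitzMultiplier P K fun _ => c := by
  refine ⟨memLp_top_const c, fun g hg hT => ?_⟩
  have hfactor : P ∘L mulOp μ (g * fun _ => c) = c • (P ∘L mulOp μ g) := by
    rw [mulOp_mul hg (memLp_top_const c), mulOp_const, ContinuousLinearMap.comp_smul,
      ContinuousLinearMap.comp_id, ContinuousLinearMap.comp_smul]
  rw [hfactor]
  exact hT.smul c

theorem mul {a b : α → ℂ} (ha : IsCompactToeplitzMultiplier P K a)
    (hb : IsCompactToeplitzMultiplier P K b) : IsCompactToeplitzMultiplier P K (a * b) := by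
  refine ⟨hb.1.mul ha.1, fun g hg hT => ?_⟩
  rw [← mul_assoc]
  exact hb.2 _ (ha.1.mul hg) (ha.2 g hg hT)

theorem add {a b : α → ℂ} (ha : IsCompactToeplitzMultiplier P K a)
    (hb : IsCompactToeplitzMultiplier P K b) : IsCompactToeplitzMultiplier P K (a + b) := by
  refine ⟨ha.1.add hb.1, fun g hg hT => ?_⟩
  rw [mul_add, mulOp_add (ha.1.mul hg) (hb.1.mul hg), ContinuousLinearMap.comp_add,
    FunLike.coe_add]
  exact (ha.2 g hg hT).add (hb.2 g hg hT)

theorem of_approx [CompleteSpace E] {v : α → ℂ} (hv : MemLp v ∞ μ)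
    (h : ∀ ε > 0, ∃ w, IsCompactToeplitzMultiplier P K w ∧ ∀ᵐ x ∂μ, ‖v x - w x‖ ≤ ε) :
    IsCompactToeplitzMultiplier P K v := by
  refine ⟨hv, fun g hg hT => CompactOnSet.of_norm_sub_le fun ε hε => ?_⟩
  set C := ‖P ∘L mulOp μ g‖
  obtain ⟨w, hw, hvw⟩ := h (ε / (C + 1)) (by positivity)
  refine ⟨P ∘L mulOp μ (g * w), hw.2 g hg hT, ?_⟩
  rw [mulOp_mul hg hv, mulOp_mul hg hw.1, ← ContinuousLinearMap.comp_sub,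
    ← ContinuousLinearMap.comp_sub, ← mulOp_sub hv hw.1, ← ContinuousLinearMap.comp_assoc]
  calc ‖(P ∘L mulOp μ g) ∘L mulOp μ (v - w)‖ ≤ C * (ε / (C + 1)) :=
        (ContinuousLinearMap.opNorm_comp_le _ _).trans
          (by gcongr; exact norm_mulOp_le (by positivity) hvw)
    _ ≤ ε := by
        rw [mul_div_assoc', div_le_iff₀ (by positivity)]
        nlinarith

end IsCompactToeplitzMultiplier

variable [TopologicalSpace α]

def multiplierSubalgebra (P : Lp E 2 μ →L[ℂ] Lp E 2 μ) (K : Set (Lp E 2 μ)) (s : Set α) :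
    StarSubalgebra ℂ C(s, ℂ) where
  carrier := {u | ∃ v : α → ℂ, (∀ x : s, v x = u x) ∧
    IsCompactToeplitzMultiplier P K v ∧ IsCompactToeplitzMultiplier P K (star v)}
  mul_mem' := by
    rintro _ _ ⟨a, hau, ha, ha'⟩ ⟨b, hbu, hb, hb'⟩
    refine ⟨a * b, fun x => by simp [hau, hbu], ha.mul hb, ?_⟩
    rw [star_mul']
    exact ha'.mul hb'
  add_mem' := by
    rintro _ _ ⟨a, hau, ha, ha'⟩ ⟨b, hbu, hb, hb'⟩
    refine ⟨a + b, fun x => by simp [hau, hbu], ha.add hb, ?_⟩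
    rw [star_add]
    exact ha'.add hb'
  algebraMap_mem' c :=
    ⟨fun _ => c, fun _ => rfl, .const c, .const (star c)⟩
  star_mem' := by
    rintro _ ⟨v, hvu, hv, hv'⟩
    refine ⟨star v, fun x => by simp [hvu], hv', ?_⟩
    rwa [star_star]

theorem IsCompactToeplitzMultiplier.of_mem_topologicalClosure [CompleteSpace E] {s : Set α}
    [CompactSpace s] (hs : ∀ᵐ x ∂μ, x ∈ s) {u : C(s, ℂ)}
    (hu : u ∈ (multiplierSubalgebra P K s).topologicalClosure) {v : α → ℂ}
    (hv : MemLp v ∞ μ) (hvu : ∀ x : s, v x = u x) : IsCompactToeplitzMultiplier P K v := by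
  refine of_approx hv fun ε hε => ?_
  rw [← SetLike.mem_coe, StarSubalgebra.topologicalClosure_coe] at hu
  obtain ⟨w, ⟨v', hv'w, hv', -⟩, huw⟩ := Metric.mem_closure_iff.mp hu ε hε
  refine ⟨v', hv', ?_⟩
  filter_upwards [hs] with x hx
  calc ‖v x - v' x‖ = ‖(u - w) ⟨x, hx⟩‖ := by
        rw [ContinuousMap.sub_apply, ← hvu ⟨x, hx⟩, ← hv'w ⟨x, hx⟩]
    _ ≤ ‖u - w‖ := (u - w).norm_coe_le_norm _
    _ ≤ ε := (dist_eq_norm u w ▸ huw).le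

end Multiplier

section Dbar

variable {n p q : ℕ} {Ω : Set (CE n)}

theorem wirtingerBar_mul {a χ : CE n → ℂ} {z : CE n} (ha : DifferentiableAt ℝ a z)
    (hχ : DifferentiableAt ℝ χ z) (k : Fin n) :
    wirtingerBar k (fun w => a w * χ w) z =
      a z * wirtingerBar k χ z + χ z * wirtingerBar k a z := by
  simp only [wirtingerBar, fderiv_fun_mul ha hχ, add_apply, smul_apply, smul_eq_mul]
  ring

theorem wirtingerBar_eq_zero_of_differentiableAt {a : CE n → ℂ} {z : CE n}
    (ha : DifferentiableAt ℂ a z) (k : Fin n) : wirtingerBar k a z = 0 := by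
  rw [wirtingerBar, (ha.hasFDerivAt.restrictScalars ℝ).fderiv]
  simp only [ContinuousLinearMap.coe_restrictScalars', map_smul, smul_eq_mul]
  linear_combination (fderiv ℂ a z (EuclideanSpace.single k 1) / 2) * Complex.I_sq

theorem DbarClosedOn.congr_ae {f g : CE n → FormIdx n p q → ℂ} (hf : DbarClosedOn Ω f)
    (hfg : ∀ᵐ z ∂(volume.restrict Ω), f z = g z) : DbarClosedOn Ω g := by
  intro J L hL χ hχ hχc hχΩ
  rw [← hf J L hL χ hχ hχc hχΩ]
  refine Finset.sum_congr rfl fun j _ => congrArg _ (integral_congr_ae ?_)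
  filter_upwards [hfg] with z hz
  rw [hz]

/-- Test `f` against `a χ`: `∂̄(a χ) = a ∂̄χ` since `a` is holomorphic. -/
theorem DbarClosedOn.mul {a : CE n → ℂ} (ha : ContDiff ℂ (⊤ : ℕ∞) a)
    {f : CE n → FormIdx n p q → ℂ} (hf : DbarClosedOn Ω f) :
    DbarClosedOn Ω fun z idx => a z * f z idx := by
  intro J L hL χ hχ hχc hχΩ
  have haχ := hf J L hL (fun w => a w * χ w) (ha.restrict_scalars ℝ |>.mul hχ)
    (hχc.mul_left) (tsupport_mul_subset_right.trans hχΩ)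
  rw [← haχ]
  refine Finset.sum_congr rfl fun j _ => congrArg _ (integral_congr_ae (.of_forall fun z => ?_))
  have hdiff : ∀ {g : CE n → ℂ}, ContDiff ℝ (⊤ : ℕ∞) g → DifferentiableAt ℝ g z :=
    fun hg => (hg.differentiable (by simp)).differentiableAt
  simp only [wirtingerBar_mul (hdiff (ha.restrict_scalars ℝ)) (hdiff hχ),
    wirtingerBar_eq_zero_of_differentiableAt ((ha.differentiable (by simp)).differentiableAt)]
  ring

theorem mem_ksqSet_of_ae_eq_smul {a : CE n → ℂ} (ha : ContDiff ℂ (⊤ : ℕ∞) a)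
    {u v : Lp (FormSp n p q) 2 (volume.restrict Ω)} (hu : u ∈ ksqSet p q Ω)
    (hv : v =ᵐ[volume.restrict Ω] fun z => a z • u z) : v ∈ ksqSet p q Ω := by
  refine (DbarClosedOn.mul ha hu).congr_ae ?_
  filter_upwards [hv] with z hz
  ext idx
  rw [hz]
  rfl

theorem smul_mem_ksqSet (c : ℂ) {u : Lp (FormSp n p q) 2 (volume.restrict Ω)}
    (hu : u ∈ ksqSet p q Ω) : c • u ∈ ksqSet p q Ω :=
  mem_ksqSet_of_ae_eq_smul contDiff_const hu (Lp.coeFn_smul c u)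

end Dbar

section Continuous

variable {α : Type*} [TopologicalSpace α] [MeasurableSpace α] [OpensMeasurableSpace α]

theorem ae_restrict_mem_closure (μ : Measure α) (s : Set α) :
    ∀ᵐ x ∂μ.restrict s, x ∈ closure s :=
  ae_restrict_of_ae_restrict_of_subset subset_closure
    (ae_restrict_mem isClosed_closure.measurableSet)

theorem memLp_top_restrict_of_continuousOn_closure {μ : Measure α} {s : Set α}
    (hs : IsCompact (closure s)) {v : α → ℂ} (hv : ContinuousOn v (closure s)) :
    MemLp v ∞ (μ.restrict s) := by
  obtain ⟨C, hC⟩ := hs.exists_bound_of_continuousOn hv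
  refine memLp_top_of_bound ?_ C ((ae_restrict_mem_closure μ s).mono hC)
  exact (hv.aestronglyMeasurable isClosed_closure.measurableSet).mono_measure
    (Measure.restrict_mono subset_closure le_rfl)

end Continuous

section Ksq

variable {n p q : ℕ} {Ω : Set (CE n)}
  {P : Lp (FormSp n p q) 2 (volume.restrict Ω) →L[ℂ] Lp (FormSp n p q) 2 (volume.restrict Ω)}

theorem isCompactToeplitzMultiplier_coord (hbdd : IsBounded Ω) (hP : IsKsqProjection p q Ω P)
    (j : Fin n) :
    IsCompactToeplitzMultiplier P (ksqSet p q Ω) (fun z => z j) ∧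
      IsCompactToeplitzMultiplier P (ksqSet p q Ω) (star fun z => z j) := by
  have hj : MemLp (fun z : CE n => z j) ∞ (volume.restrict Ω) :=
    memLp_top_restrict_of_continuousOn_closure hbdd.isCompact_closure
      (EuclideanSpace.proj j : CE n →L[ℂ] ℂ).continuous.continuousOn
  have hK : ∀ u ∈ ksqSet p q Ω, mulOp _ (fun z : CE n => z j) u ∈ ksqSet p q Ω :=
    fun u hu => mem_ksqSet_of_ae_eq_smul (EuclideanSpace.proj j : CE n →L[ℂ] ℂ).contDiff hu
      (coeFn_mulOp hj u)
  exact ⟨.of_mapsTo hj smul_mem_ksqSet hK, .star_of_mapsTo hj hP.1 hP.2.2 hK⟩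

theorem multiplierSubalgebra_separatesPoints (hbdd : IsBounded Ω)
    (hP : IsKsqProjection p q Ω P) :
    (multiplierSubalgebra P (ksqSet p q Ω) (closure Ω)).SeparatesPoints := by
  intro x y hxy
  obtain ⟨j, hj⟩ : ∃ j, (x : CE n) j ≠ (y : CE n) j := by
    by_contra! h
    exact hxy (Subtype.ext (PiLp.ext h))
  set zj : C(closure Ω, ℂ) := ⟨fun x => (x : CE n) j, by fun_prop⟩
  have hzj : zj ∈ multiplierSubalgebra P (ksqSet p q Ω) (closure Ω) :=
    ⟨fun z => z j, fun _ => rfl, isCompactToeplitzMultiplier_coord hbdd hP j⟩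
  exact ⟨zj, ⟨zj, hzj, rfl⟩, hj⟩

theorem isCompactToeplitzMultiplier_of_continuousOn (hbdd : IsBounded Ω)
    (hP : IsKsqProjection p q Ω P) {ψ : CE n → ℂ} (hψ : ContinuousOn ψ (closure Ω)) :
    IsCompactToeplitzMultiplier P (ksqSet p q Ω) ψ := by
  have := isCompact_iff_compactSpace.mp hbdd.isCompact_closure
  refine .of_mem_topologicalClosure (ae_restrict_mem_closure _ _)
    (u := ⟨(closure Ω).domRestrict ψ, hψ.domRestrict⟩) ?_
    (memLp_top_restrict_of_continuousOn_closure hbdd.isCompact_closure hψ) fun _ => rfl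
  rw [ContinuousMap.starSubalgebra_topologicalClosure_eq_top_of_separatesPoints _
    (multiplierSubalgebra_separatesPoints hbdd hP)]
  exact StarSubalgebra.mem_top

end Ksq

theorem statement18_general {n p q : ℕ}
    (Ω : Set (CE n)) (hbdd : IsBounded Ω)
    (φ : CE n → ℂ) (hφ : MemLp φ ⊤ (volume.restrict Ω))
    (ψ : CE n → ℂ) (hψ : ContinuousOn ψ (closure Ω))
    (P M M' : Lp (FormSp n p q) 2 (volume.restrict Ω) →L[ℂ]
      Lp (FormSp n p q) 2 (volume.restrict Ω))
    (hP : IsKsqProjection p q Ω P)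
    (hM : IsFormMultiplicationOp p q (volume.restrict Ω) φ M)
    (hM' : IsFormMultiplicationOp p q (volume.restrict Ω) (fun z => φ z * ψ z) M')
    (hT : CompactOnSet (P ∘L M) (ksqSet p q Ω)) :
    CompactOnSet (P ∘L M') (ksqSet p q Ω) := by
  have hψ' := isCompactToeplitzMultiplier_of_continuousOn hbdd hP hψ
  rw [eq_mulOp hφ hM] at hT
  rw [eq_mulOp (hψ'.1.mul hφ) hM']
  exact hψ'.2 φ hφ hT

theorem statement18 {n p q : ℕ} (hpn : p ≤ n) (hqn : q ≤ n)
    (Ω : Set (CE n)) (hΩ : IsOpen Ω) (hconn : IsConnected Ω) (hbdd : IsBounded Ω)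
    (φ : CE n → ℂ) (hφ : MemLp φ ⊤ (volume.restrict Ω))
    (ψ : CE n → ℂ) (hψ : ContinuousOn ψ (closure Ω))
    (P M M' : Lp (FormSp n p q) 2 (volume.restrict Ω) →L[ℂ]
      Lp (FormSp n p q) 2 (volume.restrict Ω))
    (hP : IsKsqProjection p q Ω P)
    (hM : IsFormMultiplicationOp p q (volume.restrict Ω) φ M)
    (hM' : IsFormMultiplicationOp p q (volume.restrict Ω) (fun z => φ z * ψ z) M')
    (hT : CompactOnSet (P ∘L M) (ksqSet p q Ω)) :
    CompactOnSet (P ∘L M') (ksqSet p q Ω) :=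
  statement18_general Ω hbdd φ hφ ψ hψ P M M' hP hM hM' hT
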